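/- Let T' be a tree and let S be a minimum super dominating set of T' and v a vertex of T' with v ∈ S, such that either N[v] ∩ S̄ = ∅, or N[v] contains no vertex of U_S(T'). Let T be obtained from T' by adding a star of order at least two and joining its center to v. If subdividing any single edge of T' does not increase γ_sp(T'), then subdividing any single edge of T does not increase γ_sp(T). -/

import Mathlib

open SimpleGraph

/-- `S` is a super dominating set of `G`: every vertex `u ∉ S` has some `v ∈ S`
with `N(v) ∩ Sᶜ = {u}`. -/
def SuperDomSet {V : Type} (G : SimpleGraph V) (S : Set V) : Prop :=
  ∀ u ∈ Sᶜ, ∃ v ∈ S, G.neighborSet v ∩ Sᶜ = {u}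

/-- The super domination number `γ_sp(G)`. -/
noncomputable def superDomNum {V : Type} (G : SimpleGraph V) : ℕ :=
  sInf {n | ∃ S : Set V, SuperDomSet G S ∧ S.ncard = n}

/-- `S` is a dominating set of `G`. -/
def DomSet {V : Type} (G : SimpleGraph V) (S : Set V) : Prop :=
  ∀ u ∉ S, ∃ v ∈ S, G.Adj v u

/-- The domination number `γ(G)`. -/
noncomputable def domNum {V : Type} (G : SimpleGraph V) : ℕ :=
  sInf {n | ∃ S : Set V, DomSet G S ∧ S.ncard = n}

/-- `S` is a total dominating set of `G`: every vertex has a neighbor in `S`. -/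
def TotalDomSet {V : Type} (G : SimpleGraph V) (S : Set V) : Prop :=
  ∀ u : V, ∃ v ∈ S, G.Adj v u

/-- The total domination number `γ_t(G)`. -/
noncomputable def totalDomNum {V : Type} (G : SimpleGraph V) : ℕ :=
  sInf {n | ∃ S : Set V, TotalDomSet G S ∧ S.ncard = n}

/-- A leaf is a vertex of degree 1. -/
def IsLeaf {V : Type} (G : SimpleGraph V) (v : V) : Prop :=
  (G.neighborSet v).ncard = 1

/-- A support vertex is a vertex adjacent to a leaf. -/
def IsSupport {V : Type} (G : SimpleGraph V) (v : V) : Prop :=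
  ∃ u, G.Adj v u ∧ IsLeaf G u

/-- The graph obtained from `G` by subdividing each edge in `F` once: for `e ∈ F`
the edge is removed and replaced by a path of length 2 through the new vertex `e`. -/
def subdivide {V : Type} (G : SimpleGraph V) (F : Set (Sym2 V)) :
    SimpleGraph (V ⊕ F) where
  Adj x y :=
    match x, y with
    | Sum.inl a, Sum.inl b => G.Adj a b ∧ s(a, b) ∉ F
    | Sum.inl a, Sum.inr e => a ∈ (e : Sym2 V)
    | Sum.inr e, Sum.inl a => a ∈ (e : Sym2 V)
    | Sum.inr _, Sum.inr _ => False
  symm := by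
    constructor
    rintro (a | e) (b | f) h
    · exact ⟨h.1.symm, by rw [Sym2.eq_swap]; exact h.2⟩
    · exact h
    · exact h
    · exact h
  loopless := by
    constructor
    rintro (a | e) h
    · exact G.loopless.irrefl a h.1
    · exact h

/-- `w` is an external private neighbor of `u` with respect to `Sᶜ`. -/
def IsEPN {V : Type} (G : SimpleGraph V) (S : Set V) (u w : V) : Prop :=
  w ∈ S ∧ G.neighborSet w ∩ Sᶜ = {u}

/-- `U_S(G)`: the set of vertices that are the unique external private neighbor of
some vertex of `Sᶜ` having exactly one external private neighbor. -/
def USet {V : Type} (G : SimpleGraph V) (S : Set V) : Set V :=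
  {w | ∃ u ∈ Sᶜ, IsEPN G S u w ∧ ∀ w', IsEPN G S u w' → w' = w}

/-- Add a star of order `m` (center = index `0`, leaves = the other indices) to `G`,
joining its center to the vertex `v`. -/
def addStar {V : Type} (G : SimpleGraph V) (v : V) (m : ℕ) : SimpleGraph (V ⊕ Fin m) where
  Adj x y :=
    match x, y with
    | Sum.inl a, Sum.inl b => G.Adj a b
    | Sum.inl a, Sum.inr i => a = v ∧ (i : ℕ) = 0
    | Sum.inr i, Sum.inl a => a = v ∧ (i : ℕ) = 0
    | Sum.inr i, Sum.inr j => ((i : ℕ) = 0 ∧ (j : ℕ) ≠ 0) ∨ ((j : ℕ) = 0 ∧ (i : ℕ) ≠ 0)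
  symm := by
    constructor
    rintro (a | i) (b | j) h
    · exact h.symm
    · exact h
    · exact h
    · exact h.symm
  loopless := by
    constructor
    rintro (a | i) h
    · exact G.loopless.irrefl a h
    · rcases h with ⟨h1, h2⟩ | ⟨h1, h2⟩ <;> exact h2 h1

/-!
Attaching the star costs at least `m - 1` vertices: a super dominating set of `T` contains all
but at most one vertex of the star, and its trace on `T'`, together with `v` when the centre is
the witness of `v`, is super dominating in `T'`. So `γ_sp(T) ≥ γ_sp(T') + m - 1`, and it suffices
to super dominate the subdivision `T_e` of every edge `e` of `T` with `γ_sp(T') + m - 1` vertices.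

If `e` is an edge of `T'`, then `T_e` is `T'_e` with the star attached, and `γ_sp(T'_e) ≤ γ_sp(T')`.
If `e` lies on the star or joins it to `v`, extend `S` by the star vertices except one. When
`N[v] ⊆ S`, the vertex `v` is never a witness and the centre can be dropped instead. Otherwise `v`
is traded for the subdivision vertex: since `T'` is a tree and no vertex of `N[v]` lies in `U_S`,
every vertex outside `S` has a witness outside `N[v]`, which still works for `S \ {v}`.
-/

theorem Set.ncard_image_inl_union_image_inr {α β : Type*} {A : Set α} {B : Set β}
    (hA : A.Finite) (hB : B.Finite) :
    (Sum.inl '' A ∪ Sum.inr '' B : Set (α ⊕ β)).ncard = A.ncard + B.ncard := by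
  rw [Set.ncard_union_eq Set.disjoint_image_inl_image_inr (hA.image _) (hB.image _),
    Set.ncard_image_of_injective _ Sum.inl_injective,
    Set.ncard_image_of_injective _ Sum.inr_injective]

theorem Set.ncard_eq_ncard_preimage_inl_add_ncard_preimage_inr {α β : Type*} [Finite α]
    [Finite β] (D : Set (α ⊕ β)) :
    D.ncard = (Sum.inl ⁻¹' D).ncard + (Sum.inr ⁻¹' D).ncard := by
  conv_lhs => rw [← Set.image_preimage_inl_union_image_preimage_inr D]
  exact Set.ncard_image_inl_union_image_inr (Set.toFinite _) (Set.toFinite _)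

section SuperDomination

variable {V W : Type} {G : SimpleGraph V} {H : SimpleGraph W} {S : Set V}

theorem superDomNum_le_ncard (h : SuperDomSet G S) : superDomNum G ≤ S.ncard :=
  Nat.sInf_le ⟨S, h, rfl⟩

theorem exists_superDomSet_ncard_eq (G : SimpleGraph V) :
    ∃ S, SuperDomSet G S ∧ S.ncard = superDomNum G :=
  Nat.sInf_mem (s := {n | ∃ S, SuperDomSet G S ∧ S.ncard = n})
    ⟨_, Set.univ, fun _ hu => absurd trivial hu, rfl⟩

theorem SuperDomSet.exists_isEPN (hS : SuperDomSet G S) {u : V} (hu : u ∉ S) :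
    ∃ w, IsEPN G S u w :=
  hS u hu

theorem isEPN_iff {u w : V} :
    IsEPN G S u w ↔ w ∈ S ∧ G.Adj w u ∧ u ∉ S ∧ ∀ y, G.Adj w y → y ∉ S → y = u := by
  simp only [IsEPN, Set.eq_singleton_iff_unique_mem, Set.mem_inter_iff, mem_neighborSet,
    Set.mem_compl_iff, and_imp, and_assoc]

theorem IsEPN.adj {u w : V} (h : IsEPN G S u w) : G.Adj w u := (isEPN_iff.1 h).2.1

theorem IsEPN.eq_of_adj {u w y : V} (h : IsEPN G S u w) (hy : G.Adj w y) (hyS : y ∉ S) :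
    y = u :=
  (isEPN_iff.1 h).2.2.2 y hy hyS

theorem IsEPN.insert {u w : V} (h : IsEPN G S u w) {v : V} (huv : u ≠ v) :
    IsEPN G (insert v S) u w := by
  rw [isEPN_iff] at h ⊢
  obtain ⟨hw, hadj, hu, huniq⟩ := h
  exact ⟨Set.mem_insert_of_mem v hw, hadj, by simp [huv, hu],
    fun y hy hyS => huniq y hy fun h => hyS (Set.mem_insert_of_mem v h)⟩

theorem IsEPN.comap (f : G ↪g H) {D : Set W} {u w : V} (h : IsEPN H D (f u) (f w)) :
    IsEPN G (f ⁻¹' D) u w := by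
  rw [isEPN_iff] at h ⊢
  obtain ⟨hw, hadj, hu, huniq⟩ := h
  exact ⟨hw, f.map_adj_iff.1 hadj, hu,
    fun y hy hyD => f.injective (huniq _ (f.map_adj_iff.2 hy) hyD)⟩

theorem IsEPN.map (f : G ↪g H) {D : Set W} {u w : V} (h : IsEPN G (f ⁻¹' D) u w)
    (hnew : ∀ y ∉ Set.range f, H.Adj (f w) y → y ∈ D) : IsEPN H D (f u) (f w) := by
  rw [isEPN_iff] at h ⊢
  obtain ⟨hw, hadj, hu, huniq⟩ := h
  refine ⟨hw, f.map_adj_iff.2 hadj, hu, fun y hy hyD => ?_⟩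
  by_cases hy' : y ∈ Set.range f
  · obtain ⟨y, rfl⟩ := hy'
    rw [huniq y (f.map_adj_iff.1 hy) hyD]
  · exact absurd (hnew y hy' hy) hyD

theorem SuperDomSet.image (f : G ≃g H) (h : SuperDomSet G S) : SuperDomSet H (f '' S) := by
  intro u hu
  obtain ⟨u, rfl⟩ := f.surjective u
  have hS : f.toEmbedding ⁻¹' (f '' S) = S := Set.preimage_image_eq S f.injective
  obtain ⟨w, hw⟩ := h.exists_isEPN fun hu' => hu ⟨u, hu', rfl⟩
  rw [← hS] at hw
  exact ⟨f w, IsEPN.map f.toEmbedding hw fun y hy _ => absurd (f.surjective y) hy⟩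

theorem SimpleGraph.Iso.superDomNum_le (f : G ≃g H) : superDomNum H ≤ superDomNum G := by
  obtain ⟨S, hS, hcard⟩ := exists_superDomSet_ncard_eq G
  calc superDomNum H ≤ (f '' S).ncard := superDomNum_le_ncard (hS.image f)
    _ = superDomNum G := by rw [Set.ncard_image_of_injective S f.injective, hcard]

end SuperDomination

section Forest

variable {V : Type} {G : SimpleGraph V} {S : Set V} {v : V}

theorem SimpleGraph.exists_isPath_snd_eq {u s : V} (huv : u ≠ v)
    (hs : s ∈ insert v (G.neighborSet v)) (hus : G.Adj u s) :
    ∃ p : G.Walk u v, p.IsPath ∧ p.snd = s := by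
  rcases hs with rfl | hvs
  · exact ⟨.cons hus .nil, by simp [hus.ne], rfl⟩
  · have hsv : G.Adj s v := G.adj_symm hvs
    exact ⟨.cons hus (.cons hsv .nil), by simp [hus.ne, hsv.ne, huv], rfl⟩

theorem SimpleGraph.IsAcyclic.eq_of_adj_of_mem_insert_neighborSet (hG : G.IsAcyclic)
    {u s t : V} (huv : u ≠ v) (hs : s ∈ insert v (G.neighborSet v))
    (ht : t ∈ insert v (G.neighborSet v)) (hus : G.Adj u s) (hut : G.Adj u t) : s = t := by
  obtain ⟨p, hp, rfl⟩ := exists_isPath_snd_eq huv hs hus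
  obtain ⟨q, hq, rfl⟩ := exists_isPath_snd_eq huv ht hut
  have : (⟨p, hp⟩ : G.Path u v) = ⟨q, hq⟩ := (hG.subsingleton_path u v).elim _ _
  rw [Subtype.mk.inj this]

/-- Witnesses other than `v` keep their neighbourhoods when vertices are attached at `v`. -/
def SuperDomSetAvoiding (G : SimpleGraph V) (S : Set V) (v : V) : Prop :=
  ∀ u ∉ S, u ≠ v → ∃ w ≠ v, IsEPN G S u w

theorem SuperDomSet.superDomSetAvoiding (hS : SuperDomSet G S) (hN : G.neighborSet v ⊆ S) :
    SuperDomSetAvoiding G S v := by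
  intro u hu _
  obtain ⟨w, hw⟩ := hS.exists_isEPN hu
  refine ⟨w, ?_, hw⟩
  rintro rfl
  exact hu (hN hw.adj)

theorem exists_isEPN_notMem_insert_neighborSet (hG : G.IsAcyclic) (hS : SuperDomSet G S)
    (hv : insert v (G.neighborSet v) ∩ USet G S = ∅) {u : V} (hu : u ∉ S) (huv : u ≠ v) :
    ∃ w ∉ insert v (G.neighborSet v), IsEPN G S u w := by
  obtain ⟨w₀, hw₀⟩ := hS.exists_isEPN hu
  by_cases hw₀v : w₀ ∈ insert v (G.neighborSet v)
  · have hw₀U : w₀ ∉ USet G S := fun h => (Set.eq_empty_iff_forall_notMem.1 hv) w₀ ⟨hw₀v, h⟩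
    obtain ⟨w₁, hw₁, hne⟩ : ∃ w₁, IsEPN G S u w₁ ∧ w₁ ≠ w₀ := by
      by_contra! h
      exact hw₀U ⟨u, hu, hw₀, h⟩
    refine ⟨w₁, fun hw₁v => hne ?_, hw₁⟩
    exact hG.eq_of_adj_of_mem_insert_neighborSet huv hw₁v hw₀v (G.adj_symm hw₁.adj)
      (G.adj_symm hw₀.adj)
  · exact ⟨w₀, hw₀v, hw₀⟩

theorem SuperDomSet.superDomSetAvoiding_diff_singleton (hG : G.IsAcyclic)
    (hS : SuperDomSet G S) (hv : insert v (G.neighborSet v) ∩ USet G S = ∅) :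
    SuperDomSetAvoiding G (S \ {v}) v := by
  intro u hu huv
  have huS : u ∉ S := fun h => hu ⟨h, huv⟩
  obtain ⟨w, hwv, hw⟩ := exists_isEPN_notMem_insert_neighborSet hG hS hv huS huv
  have hw' := isEPN_iff.1 hw
  refine ⟨w, fun h => hwv (h ▸ Set.mem_insert w _), isEPN_iff.2
    ⟨⟨hw'.1, fun h => hwv (h ▸ Set.mem_insert w _)⟩, hw'.2.1, hu, fun y hy hyS => ?_⟩⟩
  have hyv : y ≠ v := by
    rintro rfl
    exact hwv (Set.mem_insert_of_mem _ (G.adj_symm hy))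
  exact hw'.2.2.2 y hy fun h => hyS ⟨h, hyv⟩

end Forest
section AddStar

variable {V : Type} {G : SimpleGraph V} {v : V} {m : ℕ} {S : Set V} {j : Fin m}

@[simp] theorem addStar_adj_inl_inl {a b : V} :
    (addStar G v m).Adj (.inl a) (.inl b) ↔ G.Adj a b := Iff.rfl

variable (G v m) in
def addStarEmbedding : G ↪g addStar G v m :=
  ⟨Function.Embedding.inl, Iff.rfl⟩

def starExtend (S : Set V) (j : Fin m) : Set (V ⊕ Fin m) :=
  Sum.inl '' S ∪ Sum.inr '' {j}ᶜ

@[simp] theorem inl_mem_starExtend {a : V} : .inl a ∈ starExtend S j ↔ a ∈ S := by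
  simp [starExtend]

@[simp] theorem inr_mem_starExtend {k : Fin m} : .inr k ∈ starExtend S j ↔ k ≠ j := by
  simp [starExtend]

theorem ncard_starExtend_add_one [Finite V] : (starExtend S j).ncard + 1 = S.ncard + m := by
  rw [starExtend, Set.ncard_image_inl_union_image_inr (Set.toFinite _) (Set.toFinite _),
    Set.ncard_compl, Set.ncard_singleton, Nat.card_eq_fintype_card, Fintype.card_fin]
  have : 0 < m := Fin.pos j
  omega

variable [NeZero m]

@[simp] theorem addStar_adj_inl_inr {a : V} {i : Fin m} :
    (addStar G v m).Adj (.inl a) (.inr i) ↔ a = v ∧ i = 0 := by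
  simp [addStar, Fin.val_eq_zero_iff]

@[simp] theorem addStar_adj_inr_inl {a : V} {i : Fin m} :
    (addStar G v m).Adj (.inr i) (.inl a) ↔ a = v ∧ i = 0 := by
  simp [addStar, Fin.val_eq_zero_iff]

@[simp] theorem addStar_adj_inr_inr {i j : Fin m} :
    (addStar G v m).Adj (.inr i) (.inr j) ↔ i = 0 ∧ j ≠ 0 ∨ j = 0 ∧ i ≠ 0 := by
  simp [addStar, Fin.val_eq_zero_iff]

variable {D : Set (V ⊕ Fin m)}

theorem SuperDomSet.isEPN_addStar_center (hD : SuperDomSet (addStar G v m) D) {i : Fin m}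
    (hi0 : i ≠ 0) (hi : .inr i ∉ D) : IsEPN (addStar G v m) D (.inr i) (.inr 0) := by
  obtain ⟨w, hw⟩ := hD.exists_isEPN hi
  rcases w with a | k
  · exact absurd (addStar_adj_inl_inr.1 hw.adj).2 hi0
  · obtain ⟨rfl, -⟩ | ⟨rfl, -⟩ := addStar_adj_inr_inr.1 hw.adj
    · exact hw
    · exact absurd rfl hi0

theorem SuperDomSet.le_ncard_preimage_inr_add_one (hD : SuperDomSet (addStar G v m) D) :
    m ≤ (Sum.inr ⁻¹' D).ncard + 1 := by
  have key : ∀ i ∉ Sum.inr ⁻¹' D, i ≠ 0 → ∀ j ∉ Sum.inr ⁻¹' D, j = i := by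
    intro i hi hi0 j hj
    have hc := hD.isEPN_addStar_center hi0 hi
    have hj0 : j ≠ 0 := by
      rintro rfl
      exact hj hc.1
    exact Sum.inr_injective (hc.eq_of_adj (addStar_adj_inr_inr.2 (.inl ⟨rfl, hj0⟩)) hj)
  have hsub : (Sum.inr ⁻¹' D)ᶜ.Subsingleton := by
    intro i hi j hj
    by_cases hi0 : i = 0
    · by_cases hj0 : j = 0
      · rw [hi0, hj0]
      · exact key j hj hj0 i hi
    · exact (key i hi hi0 j hj).symm
  have hcompl := Set.ncard_add_ncard_compl (Sum.inr ⁻¹' D)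
  rw [Nat.card_eq_fintype_card, Fintype.card_fin] at hcompl
  have := Set.ncard_le_one_iff_subsingleton.2 hsub
  omega

theorem SuperDomSet.isEPN_inl_or (hD : SuperDomSet (addStar G v m) D) {u : V}
    (hu : .inl u ∉ D) :
    (∃ w, IsEPN G (Sum.inl ⁻¹' D) u w) ∨ u = v ∧ Sum.inr ⁻¹' D = Set.univ := by
  obtain ⟨w, hw⟩ := hD.exists_isEPN hu
  rcases w with s | i
  · exact .inl ⟨s, IsEPN.comap (addStarEmbedding G v m) hw⟩
  obtain ⟨rfl, rfl⟩ := addStar_adj_inr_inl.1 hw.adj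
  refine .inr ⟨rfl, Set.eq_univ_of_forall fun k => ?_⟩
  by_cases hk : k = 0
  · exact hk ▸ hw.1
  · by_contra hkD
    exact Sum.inr_ne_inl (hw.eq_of_adj (addStar_adj_inr_inr.2 (.inl ⟨rfl, hk⟩)) hkD)

theorem superDomNum_add_le_addStar [Finite V] :
    superDomNum G + m ≤ superDomNum (addStar G v m) + 1 := by
  obtain ⟨D, hD, hcard⟩ := exists_superDomSet_ncard_eq (addStar G v m)
  rw [← hcard, Set.ncard_eq_ncard_preimage_inl_add_ncard_preimage_inr D]
  by_cases hfull : Sum.inr ⁻¹' D = Set.univ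
  · have hS : SuperDomSet G (insert v (Sum.inl ⁻¹' D)) := by
      intro u hu
      rw [Set.mem_compl_iff, Set.mem_insert_iff, not_or] at hu
      obtain ⟨w, hw⟩ | ⟨rfl, -⟩ := hD.isEPN_inl_or hu.2
      · exact ⟨w, hw.insert hu.1⟩
      · exact absurd rfl hu.1
    have h₁ := superDomNum_le_ncard hS
    have h₂ := Set.ncard_insert_le v (Sum.inl ⁻¹' D)
    rw [hfull, Set.ncard_univ, Nat.card_eq_fintype_card, Fintype.card_fin]
    omega
  · have hS : SuperDomSet G (Sum.inl ⁻¹' D) := fun u hu =>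
      (hD.isEPN_inl_or hu).elim id fun h => absurd h.2 hfull
    have := superDomNum_le_ncard hS
    have := hD.le_ncard_preimage_inr_add_one
    omega

theorem IsEPN.addStar_starExtend {u w : V} (h : IsEPN G S u w) (hj : w = v → j ≠ 0) :
    IsEPN (addStar G v m) (starExtend S j) (.inl u) (.inl w) := by
  have hpre : addStarEmbedding G v m ⁻¹' starExtend S j = S := by
    ext a
    exact inl_mem_starExtend
  rw [← hpre] at h
  refine IsEPN.map (addStarEmbedding G v m) h fun y hy hadj => ?_
  rcases y with a | k
  · exact absurd ⟨a, rfl⟩ hy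
  · obtain ⟨hw, rfl⟩ := addStar_adj_inl_inr.1 hadj
    exact inr_mem_starExtend.2 (hj hw).symm

theorem SuperDomSet.addStar_starExtend_of_mem (hS : SuperDomSet G S) (hv : v ∈ S)
    (hj : j ≠ 0) : SuperDomSet (addStar G v m) (starExtend S j) := by
  rintro (u | k) hu
  · obtain ⟨w, hw⟩ := hS.exists_isEPN (inl_mem_starExtend.not.1 hu)
    exact ⟨_, hw.addStar_starExtend fun _ => hj⟩
  · obtain rfl : k = j := by simpa using hu
    refine ⟨.inr 0, isEPN_iff.2 ⟨by simpa using hj.symm, by simp [hj], hu, ?_⟩⟩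
    rintro (a | k) hadj hk
    · obtain ⟨rfl, -⟩ := addStar_adj_inr_inl.1 hadj
      exact absurd (inl_mem_starExtend.2 hv) hk
    · simpa using hk

theorem SuperDomSet.addStar_starExtend_zero (hS : SuperDomSet G S) (hv : v ∉ S)
    (hj : j ≠ 0) : SuperDomSet (addStar G v m) (starExtend S 0) := by
  rintro (u | k) hu
  · obtain ⟨w, hw⟩ := hS.exists_isEPN (inl_mem_starExtend.not.1 hu)
    exact ⟨_, hw.addStar_starExtend fun hwv => absurd (hwv ▸ hw.1) hv⟩
  · obtain rfl : k = 0 := by simpa using hu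
    refine ⟨.inr j, isEPN_iff.2 ⟨by simpa using hj, by simp [hj], hu, ?_⟩⟩
    rintro (a | k) hadj -
    · exact absurd (addStar_adj_inr_inl.1 hadj).2 hj
    · simp_all

theorem superDomNum_addStar_le [Finite V] (hj : j ≠ 0) :
    superDomNum (addStar G v m) + 1 ≤ superDomNum G + m := by
  obtain ⟨S, hS, hcard⟩ := exists_superDomSet_ncard_eq G
  rw [← hcard]
  by_cases hv : v ∈ S
  · rw [← ncard_starExtend_add_one (j := j)]
    exact Nat.add_le_add_right (superDomNum_le_ncard (hS.addStar_starExtend_of_mem hv hj)) 1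
  · rw [← ncard_starExtend_add_one (j := 0)]
    exact Nat.add_le_add_right (superDomNum_le_ncard (hS.addStar_starExtend_zero hv hj)) 1

end AddStar

section Subdivide

variable {V : Type} {G : SimpleGraph V} {F : Set (Sym2 V)} {e : Sym2 V}

@[simp] theorem subdivide_adj_inl_inl {a b : V} :
    (subdivide G F).Adj (.inl a) (.inl b) ↔ G.Adj a b ∧ s(a, b) ∉ F := Iff.rfl

@[simp] theorem subdivide_adj_inr_inr {f g : F} : ¬(subdivide G F).Adj (.inr f) (.inr g) :=
  id

@[simp] theorem subdivide_singleton_adj_inl_inr {a : V} {f : ({e} : Set (Sym2 V))} :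
    (subdivide G {e}).Adj (.inl a) (.inr f) ↔ a ∈ e := by
  rw [Subsingleton.elim f ⟨e, rfl⟩]
  rfl

@[simp] theorem subdivide_singleton_adj_inr_inl {a : V} {f : ({e} : Set (Sym2 V))} :
    (subdivide G {e}).Adj (.inr f) (.inl a) ↔ a ∈ e := by
  rw [Subsingleton.elim f ⟨e, rfl⟩]
  rfl

variable {v : V} {m : ℕ} [NeZero m] {S : Set V} {j : Fin m}

def subdivideAddStarIso (a b : V) :
    subdivide (addStar G v m) {s(.inl a, .inl b)} ≃g
      addStar (subdivide G {s(a, b)}) (.inl v) m where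
  toFun := Sum.elim (Sum.elim (.inl ∘ .inl) .inr) fun _ => .inl (.inr ⟨_, rfl⟩)
  invFun := Sum.elim (Sum.elim (.inl ∘ .inl) fun _ => .inr ⟨_, rfl⟩) (.inl ∘ .inr)
  left_inv := by
    rintro ((x | k) | f) <;> simp
    exact Subsingleton.elim _ _
  right_inv := by
    rintro ((x | f) | k) <;> simp
    exact Subsingleton.elim _ _
  map_rel_iff' := by
    rintro ((x | k) | f) ((y | l) | g) <;> simp

theorem superDomNum_subdivide_addStar_add_one_le [Finite V] {a b : V} (hj : j ≠ 0) :
    superDomNum (subdivide (addStar G v m) {s(.inl a, .inl b)}) + 1 ≤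
      superDomNum (subdivide G {s(a, b)}) + m :=
  calc _ ≤ superDomNum (addStar (subdivide G {s(a, b)}) (.inl v) m) + 1 := by
        grw [(subdivideAddStarIso a b).symm.superDomNum_le]
    _ ≤ superDomNum (subdivide G {s(a, b)}) + m := superDomNum_addStar_le hj

theorem SuperDomSetAvoiding.exists_isEPN_subdivide {e : Sym2 (V ⊕ Fin m)}
    (he : ∀ a, .inl a ∈ e → a = v) (hS : SuperDomSetAvoiding G S v)
    {D : Set ((V ⊕ Fin m) ⊕ ({e} : Set (Sym2 (V ⊕ Fin m))))}
    (hD : ∀ a, .inl (.inl a) ∈ D ↔ a ∈ S) {u : V} (hu : u ∉ S) (huv : u ≠ v) :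
    ∃ w, IsEPN (subdivide (addStar G v m) {e}) D (.inl (.inl u)) w := by
  obtain ⟨w, hwv, hw⟩ := hS u hu huv
  have hwe : .inl w ∉ e := fun h => hwv (he w h)
  refine ⟨.inl (.inl w), isEPN_iff.2 ⟨(hD w).2 hw.1, ?_, (hD u).not.2 hu, ?_⟩⟩
  · simp only [subdivide_adj_inl_inl, addStar_adj_inl_inl, Set.mem_singleton_iff]
    exact ⟨hw.adj, fun h => hwe (h ▸ Sym2.mem_mk_left _ _)⟩
  · rintro ((y | k) | f) hadj hy
    · simp only [subdivide_adj_inl_inl, addStar_adj_inl_inl] at hadj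
      rw [hw.eq_of_adj hadj.1 ((hD y).not.1 hy)]
    · simp only [subdivide_adj_inl_inl, addStar_adj_inl_inr] at hadj
      exact absurd hadj.1.1 hwv
    · exact absurd (subdivide_singleton_adj_inl_inr.1 hadj) hwe

theorem SuperDomSetAvoiding.subdivide_bridge_of_mem (hS : SuperDomSetAvoiding G S v)
    (hv : v ∈ S) (hN : G.neighborSet v ⊆ S) (hj : j ≠ 0) :
    SuperDomSet (subdivide (addStar G v m) {s(.inl v, .inr 0)}) (Sum.inl '' starExtend S 0) := by
  rintro ((u | k) | ⟨_, rfl⟩) hu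
  · have hu : u ∉ S := by simpa using hu
    exact hS.exists_isEPN_subdivide (by simp) (by simp) hu (ne_of_mem_of_not_mem hv hu).symm
  · obtain rfl : k = 0 := by simpa using hu
    refine ⟨.inl (.inr j), isEPN_iff.2 ⟨by simpa using hj, by simp [hj], hu, ?_⟩⟩
    rintro ((y | l) | f) hadj hy <;> simp_all
  · refine ⟨.inl (.inl v), isEPN_iff.2 ⟨by simpa using hv, by simp, hu, ?_⟩⟩
    rintro ((y | l) | ⟨_, rfl⟩) hadj hy
    · exact absurd (by simpa using hN (addStar_adj_inl_inl.1 (subdivide_adj_inl_inl.1 hadj).1)) hy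
    · simp_all
    · rfl

theorem SuperDomSetAvoiding.subdivide_bridge (hS : SuperDomSetAvoiding G S v) (hj : j ≠ 0) :
    SuperDomSet (subdivide (addStar G v m) {s(.inl v, .inr 0)})
      (insert (.inr ⟨_, rfl⟩) (Sum.inl '' starExtend S j)) := by
  rintro ((u | k) | ⟨_, rfl⟩) hu
  · have huS : u ∉ S := by simpa using hu
    by_cases huv : u = v
    · subst huv
      refine ⟨.inr ⟨_, rfl⟩, isEPN_iff.2 ⟨by simp, by simp, hu, ?_⟩⟩
      rintro ((y | l) | ⟨_, rfl⟩) hadj hy <;> simp_all [eq_comm]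
    · exact hS.exists_isEPN_subdivide (by simp) (by simp) huS huv
  · obtain rfl : k = j := by simpa using hu
    refine ⟨.inl (.inr 0), isEPN_iff.2 ⟨by simpa using hj.symm, by simp [hj], hu, ?_⟩⟩
    rintro ((y | l) | ⟨_, rfl⟩) hadj hy <;> simp_all
  · simp at hu

theorem SuperDomSetAvoiding.subdivide_starEdge_of_mem (hS : SuperDomSetAvoiding G S v)
    (hv : v ∈ S) (hN : G.neighborSet v ⊆ S) (hj : j ≠ 0) :
    SuperDomSet (subdivide (addStar G v m) {s(.inr 0, .inr j)}) (Sum.inl '' starExtend S 0) := by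
  rintro ((u | k) | ⟨_, rfl⟩) hu
  · have hu : u ∉ S := by simpa using hu
    exact hS.exists_isEPN_subdivide (by simp) (by simp) hu (ne_of_mem_of_not_mem hv hu).symm
  · obtain rfl : k = 0 := by simpa using hu
    refine ⟨.inl (.inl v), isEPN_iff.2 ⟨by simpa using hv, by simp, hu, ?_⟩⟩
    rintro ((y | l) | ⟨_, rfl⟩) hadj hy
    · exact absurd (by simpa using hN (addStar_adj_inl_inl.1 (subdivide_adj_inl_inl.1 hadj).1)) hy
    · simp_all
    · simp_all
  · refine ⟨.inl (.inr j), isEPN_iff.2 ⟨by simpa using hj, by simp, hu, ?_⟩⟩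
    rintro ((y | l) | ⟨_, rfl⟩) hadj hy
    · simp_all
    · simp_all
    · rfl

theorem SuperDomSetAvoiding.subdivide_starEdge (hS : SuperDomSetAvoiding G S v) (hj : j ≠ 0) :
    SuperDomSet (subdivide (addStar G v m) {s(.inr 0, .inr j)})
      (insert (.inr ⟨_, rfl⟩) (Sum.inl '' starExtend S j)) := by
  rintro ((u | k) | ⟨_, rfl⟩) hu
  · have huS : u ∉ S := by simpa using hu
    by_cases huv : u = v
    · subst huv
      refine ⟨.inl (.inr 0), isEPN_iff.2 ⟨by simpa using hj.symm, by simp, hu, ?_⟩⟩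
      rintro ((y | l) | ⟨_, rfl⟩) hadj hy <;> simp_all
    · exact hS.exists_isEPN_subdivide (by simp) (by simp) huS huv
  · obtain rfl : k = j := by simpa using hu
    refine ⟨.inr ⟨_, rfl⟩, isEPN_iff.2 ⟨by simp, by simp, hu, ?_⟩⟩
    rintro ((y | l) | ⟨_, rfl⟩) hadj hy <;> simp_all
  · simp at hu

theorem superDomNum_add_one_le_of_starExtend [Finite V] {β : Type}
    {H : SimpleGraph ((V ⊕ Fin m) ⊕ β)} {x : β} (hG : G.IsAcyclic) (hS : SuperDomSet G S)
    (hvS : v ∈ S)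
    (hv : insert v (G.neighborSet v) ∩ Sᶜ = ∅ ∨ insert v (G.neighborSet v) ∩ USet G S = ∅)
    (hA : ∀ S, SuperDomSetAvoiding G S v → v ∈ S → G.neighborSet v ⊆ S →
      SuperDomSet H (Sum.inl '' starExtend S 0))
    (hB : ∀ S, SuperDomSetAvoiding G S v →
      SuperDomSet H (insert (.inr x) (Sum.inl '' starExtend S j))) :
    superDomNum H + 1 ≤ S.ncard + m := by
  rcases hv with hv | hv
  · have hN : G.neighborSet v ⊆ S := (Set.insert_subset_iff.1 (Set.sdiff_eq_empty.1 hv)).2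
    have h₁ := superDomNum_le_ncard (hA S (hS.superDomSetAvoiding hN) hvS hN)
    rw [Set.ncard_image_of_injective _ Sum.inl_injective] at h₁
    have h₂ := ncard_starExtend_add_one (S := S) (j := (0 : Fin m))
    omega
  · have h₁ := superDomNum_le_ncard (hB _ (hS.superDomSetAvoiding_diff_singleton hG hv))
    have h₂ := Set.ncard_insert_le (Sum.inr x) (Sum.inl '' starExtend (S \ {v}) j)
    rw [Set.ncard_image_of_injective _ Sum.inl_injective] at h₂
    have h₃ := ncard_starExtend_add_one (S := S \ {v}) (j := j)
    have h₄ := Set.ncard_sdiff_singleton_add_one hvS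
    omega

end Subdivide

/-- Operation 𝒰₁ preserves Class 2: if no single edge subdivision increases
`γ_sp(T')`, and `T` is obtained from `T'` by adding a star of order `m ≥ 2` joined to a
suitable vertex `v`, then no single edge subdivision increases `γ_sp(T)`. -/
theorem classTwo_preserved_addStar {V : Type} [Fintype V] (T' : SimpleGraph V)
    (hT' : T'.IsTree) (v : V) (S : Set V) (hS : SuperDomSet T' S)
    (hmin : S.ncard = superDomNum T') (hvS : v ∈ S)
    (hv : insert v (T'.neighborSet v) ∩ Sᶜ = ∅ ∨
          insert v (T'.neighborSet v) ∩ USet T' S = ∅)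
    (m : ℕ) (hm : 2 ≤ m)
    (hclass : ∀ e ∈ T'.edgeSet, superDomNum (subdivide T' {e}) ≤ superDomNum T') :
    ∀ e ∈ (addStar T' v m).edgeSet,
      superDomNum (subdivide (addStar T' v m) {e}) ≤ superDomNum (addStar T' v m) := by
  have : NeZero m := ⟨by omega⟩
  have hleaf : (⟨1, hm⟩ : Fin m) ≠ 0 := by simp [Fin.ext_iff]
  have hbridge : superDomNum (subdivide (addStar T' v m) {s(.inl v, .inr 0)}) + 1 ≤ S.ncard + m :=
    superDomNum_add_one_le_of_starExtend hT'.isAcyclic hS hvS hv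
      (fun _ hS' hvS' hN => hS'.subdivide_bridge_of_mem hvS' hN hleaf)
      (fun _ hS' => hS'.subdivide_bridge hleaf)
  have hstarEdge : ∀ j ≠ (0 : Fin m),
      superDomNum (subdivide (addStar T' v m) {s(.inr 0, .inr j)}) + 1 ≤ S.ncard + m :=
    fun j hj => superDomNum_add_one_le_of_starExtend hT'.isAcyclic hS hvS hv
      (fun _ hS' hvS' hN => hS'.subdivide_starEdge_of_mem hvS' hN hj)
      (fun _ hS' => hS'.subdivide_starEdge hj)
  have hlower := superDomNum_add_le_addStar (G := T') (v := v) (m := m)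
  intro e he
  suffices superDomNum (subdivide (addStar T' v m) {e}) + 1 ≤ superDomNum T' + m by omega
  rw [← hmin]
  induction e using Sym2.ind with | _ x y => ?_
  rw [mem_edgeSet] at he
  rcases x with a | i <;> rcases y with b | k
  · grw [superDomNum_subdivide_addStar_add_one_le hleaf, hclass _ he, hmin]
  · obtain ⟨rfl, rfl⟩ := addStar_adj_inl_inr.1 he
    exact hbridge
  · obtain ⟨rfl, rfl⟩ := addStar_adj_inr_inl.1 he
    rw [Sym2.eq_swap]
    exact hbridge
  · rcases addStar_adj_inr_inr.1 he with ⟨rfl, hk⟩ | ⟨rfl, hi⟩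
    · exact hstarEdge k hk
    · rw [Sym2.eq_swap]
      exact hstarEdge i hi
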